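/- arXiv:1310.0177 — 2 statements merged into one kernel-verified Lean document; each statement's English description precedes it below -/
import Mathlib

section
/- For the multiplicative price update algorithm with initial price p_0 and update factor r > 1, the social welfare v(S) = sum_i v_i(S_i) of the produced allocation satisfies v(S) >= (1/(r-1)) * (sum over goods e of p_e^* - m*p_0), where p_e^* = p_0 * r^{l_e^*} is the final price of good e and l_e^* is the total number of copies of e allocated. -/
/-!
Summing the hypothesis over bidders bounds the welfare below by the total price paid. Regrouping
that total by goods, the bidders receiving a good `e` pay for it `p₀ r ^ k` for `k = 0, 1, …` up
to `ℓ_e^* - 1`, one bidder for each `k`, so good `e` contributes the geometric sum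
`p₀ (r ^ ℓ_e^* - 1) / (r - 1)`.
-/

open scoped BigOperators

/-- Number of copies of good `e` allocated to bidders preceding `i`. -/
def load {U : Type} [DecidableEq U] {n : ℕ} (S : Fin n → Finset U)
    (i : Fin n) (e : U) : ℕ :=
  (Finset.univ.filter fun j : Fin n => j < i ∧ e ∈ S j).card

/-- Total number of copies of good `e` allocated. -/
def totalLoad {U : Type} [DecidableEq U] {n : ℕ} (S : Fin n → Finset U)
    (e : U) : ℕ :=
  (Finset.univ.filter fun j : Fin n => e ∈ S j).card

open Finset

theorem Finset.sum_card_filter_lt {α M : Type*} [LinearOrder α] [AddCommMonoid M]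
    (s : Finset α) (f : ℕ → M) :
    ∑ i ∈ s, f #{j ∈ s | j < i} = ∑ k ∈ range #s, f k := by
  induction s using Finset.induction_on_max with
  | empty => simp
  | insert a s ha ih =>
    have ha_notMem : a ∉ s := fun h => lt_irrefl a (ha a h)
    have h_below : ∀ i ∈ s, {j ∈ insert a s | j < i} = {j ∈ s | j < i} := by
      intro i hi
      rw [filter_insert, if_neg (ha i hi).not_gt]
    have h_top : {j ∈ insert a s | j < a} = s := by
      rw [filter_insert, if_neg (lt_irrefl a), filter_true_of_mem ha]
    rw [sum_insert ha_notMem, card_insert_of_notMem ha_notMem, sum_range_succ, h_top,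
      sum_congr rfl fun i hi => by rw [h_below i hi], ih, add_comm]

section Allocation

variable {U : Type} [DecidableEq U] {n : ℕ} (S : Fin n → Finset U)

lemma load_eq_card_filter_lt (i : Fin n) (e : U) :
    load S i e = #{j ∈ {j | e ∈ S j} | j < i} := by
  rw [load, filter_filter]
  simp only [and_comm]

lemma sum_sum_load_eq_sum_range [Fintype U] {M : Type*} [AddCommMonoid M] (f : ℕ → M) :
    ∑ i, ∑ e ∈ S i, f (load S i e) = ∑ e, ∑ k ∈ range (totalLoad S e), f k := by
  rw [sum_comm' (t' := univ) (s' := fun e => {j | e ∈ S j}) (by simp)]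
  refine sum_congr rfl fun e _ => ?_
  simp only [load_eq_card_filter_lt]
  exact sum_card_filter_lt _ f

lemma sum_sum_mul_pow_load [Fintype U] {p₀ r : ℝ} (hr : r ≠ 1) :
    ∑ i, ∑ e ∈ S i, p₀ * r ^ load S i e
      = (1 / (r - 1)) * ((∑ e : U, p₀ * r ^ totalLoad S e) - Fintype.card U * p₀) := by
  have hr' : r - 1 ≠ 0 := sub_ne_zero.mpr hr
  calc ∑ i, ∑ e ∈ S i, p₀ * r ^ load S i e
      = ∑ e, p₀ * ∑ k ∈ range (totalLoad S e), r ^ k := by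
        simp only [sum_sum_load_eq_sum_range S (fun k => p₀ * r ^ k), mul_sum]
    _ = ∑ e, (1 / (r - 1)) * (p₀ * r ^ totalLoad S e - p₀) := by
        refine sum_congr rfl fun e _ => ?_
        rw [geom_sum_eq hr]
        field_simp
    _ = (1 / (r - 1)) * ((∑ e : U, p₀ * r ^ totalLoad S e) - Fintype.card U * p₀) := by
        rw [← mul_sum, sum_sub_distrib, sum_const, card_univ, nsmul_eq_mul]

end Allocation

theorem multiplicativePriceUpdate_welfare_ge_prices_general
    {U : Type} [Fintype U] [DecidableEq U] {n : ℕ}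
    (v : Fin n → Finset U → ℝ) (S : Fin n → Finset U)
    (p₀ r : ℝ) (hr : 1 < r)
    -- each allocated set has valuation at least the sum of the current prices:
    (halg : ∀ i : Fin n, (∑ e ∈ S i, p₀ * r ^ load S i e) ≤ v i (S i)) :
    (1 / (r - 1)) * ((∑ e : U, p₀ * r ^ totalLoad S e) - (Fintype.card U) * p₀)
      ≤ ∑ i, v i (S i) := by
  rw [← sum_sum_mul_pow_load S hr.ne']
  exact sum_le_sum fun i _ => halg i

theorem multiplicativePriceUpdate_welfare_ge_prices
    {U : Type} [Fintype U] [DecidableEq U] {n : ℕ}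
    (v : Fin n → Finset U → ℝ) (S : Fin n → Finset U)
    (p₀ r : ℝ) (hp₀ : 0 < p₀) (hr : 1 < r)
    (hv : ∀ i T, 0 ≤ v i T)
    -- each allocated set has valuation at least the sum of the current prices:
    (halg : ∀ i : Fin n, (∑ e ∈ S i, p₀ * r ^ load S i e) ≤ v i (S i)) :
    (1 / (r - 1)) * ((∑ e : U, p₀ * r ^ totalLoad S e) - (Fintype.card U) * p₀)
      ≤ ∑ i, v i (S i) :=
  multiplicativePriceUpdate_welfare_ge_prices_general v S p₀ r hr halg
end

section
/- The multiplicative price update algorithm with p_0 = mu/(4bm) and r = (4bm)^{1/b}, where mu/2 <= v_max < mu, produces a feasible allocation S with social welfare v(S) >= OPT / (2*(b*(r-1)+1)), hence an O(b * m^{1/b}) approximation of the optimal social welfare OPT. -/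
/-!
Bidder `i` pays the current price `p₀ * r ^ load S i e` of every good `e` it takes, and each copy
sold multiplies the price by `r`. Feasibility: the `(b+1)`-st copy of a good would cost
`p₀ * r ^ b = μ > v_max`, more than any bidder values any bundle. Welfare: the `k`-th copy of `e`
costs `p₀ * r ^ k`, so the payments form geometric sums and `(r - 1)` times them equals the total
final price `Q` minus `m * p₀`; since bidders pay at most their values, `Q - m p₀ ≤ (r - 1) v(S)`.
On the other hand every bundle `T` a bidder did not take was too expensive at its turn, so its value
is at most `v(S i)` plus its final price; summed over a feasible allocation this gives
`OPT ≤ v(S) + b Q`, and the same bound holds for `v_max`. Since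
`b m p₀ = μ / 4 ≤ v_max / 2 ≤ (v(S) + b Q) / 2`, multiplying the first bound by `b` gives
`v(S) + b Q ≤ 2 (b (r - 1) + 1) v(S)`.
-/

open scoped BigOperators

open Finset

section Load

variable {U : Type} [DecidableEq U] {n : ℕ} (S : Fin n → Finset U)

lemma load_le_totalLoad (i : Fin n) (e : U) : load S i e ≤ totalLoad S e :=
  card_le_card fun _ hk => by simp_all

lemma load_lt_load_of_mem {i j : Fin n} {e : U} (hi : e ∈ S i) (hij : i < j) :
    load S i e < load S j e := by
  refine card_lt_card ((ssubset_iff_of_subset fun k hk => ?_).2 ⟨i, by simp [hij, hi], by simp⟩)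
  simp only [mem_filter, mem_univ, true_and] at hk ⊢
  exact ⟨hk.1.trans hij, hk.2⟩

lemma load_lt_totalLoad_of_mem {i : Fin n} {e : U} (hi : e ∈ S i) :
    load S i e < totalLoad S e := by
  refine (card_le_card fun k hk => ?_).trans_lt
    (card_erase_lt_of_mem (s := univ.filter fun j => e ∈ S j) (by simpa using hi))
  simp only [mem_filter, mem_univ, true_and] at hk
  simpa using ⟨hk.1.ne, hk.2⟩

lemma injOn_load (e : U) : Set.InjOn (load S · e) (univ.filter fun j => e ∈ S j) := by
  intro i hi j hj hij
  simp only [coe_filter, mem_univ, true_and, Set.mem_ofPred_eq] at hi hj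
  by_contra hne
  rcases lt_or_gt_of_ne hne with h | h
  · exact (load_lt_load_of_mem S hi h).ne hij
  · exact (load_lt_load_of_mem S hj h).ne' hij

lemma image_load_eq_range (e : U) :
    (univ.filter fun j => e ∈ S j).image (load S · e) = range (totalLoad S e) := by
  refine eq_of_subset_of_card_le (fun k hk => ?_) ?_
  · obtain ⟨i, hi, rfl⟩ := mem_image.1 hk
    exact mem_range.2 (load_lt_totalLoad_of_mem S (by simpa using hi))
  · rw [card_range, card_image_of_injOn (injOn_load S e)]
    rfl

lemma exists_load_eq_of_lt_totalLoad {e : U} {k : ℕ} (hk : k < totalLoad S e) :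
    ∃ i, e ∈ S i ∧ load S i e = k := by
  obtain ⟨i, hi, hik⟩ := mem_image.1 ((image_load_eq_range S e).symm ▸ mem_range.2 hk)
  exact ⟨i, by simpa using hi, hik⟩

variable [Fintype U]

lemma sum_sum_mem_comm {M : Type*} [AddCommMonoid M] (g : Fin n → U → M) :
    ∑ i, ∑ e ∈ S i, g i e = ∑ e, ∑ i ∈ univ.filter (fun j => e ∈ S j), g i e :=
  sum_comm' fun i e => by simp

lemma sum_sum_mem_eq_sum_totalLoad_mul (P : U → ℝ) :
    ∑ i, ∑ e ∈ S i, P e = ∑ e, totalLoad S e * P e := by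
  simp only [sum_sum_mem_comm, sum_const, nsmul_eq_mul, totalLoad]

lemma sum_le_sum_add_mul_sum_of_totalLoad_le {P : U → ℝ} (hP : ∀ e, 0 ≤ P e) {b : ℕ}
    (hS : ∀ e, totalLoad S e ≤ b) {x y : Fin n → ℝ} (h : ∀ i, x i ≤ y i + ∑ e ∈ S i, P e) :
    ∑ i, x i ≤ ∑ i, y i + b * ∑ e, P e :=
  calc ∑ i, x i ≤ ∑ i, (y i + ∑ e ∈ S i, P e) := sum_le_sum fun i _ => h i
    _ = ∑ i, y i + ∑ e, totalLoad S e * P e := by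
      rw [sum_add_distrib, sum_sum_mem_eq_sum_totalLoad_mul]
    _ ≤ ∑ i, y i + b * ∑ e, P e := by
      rw [mul_sum]
      gcongr with e
      · exact hP e
      · exact_mod_cast hS e

lemma sum_sum_load_eq_sum_sum_range {M : Type*} [AddCommMonoid M] (f : ℕ → M) :
    ∑ i, ∑ e ∈ S i, f (load S i e) = ∑ e, ∑ k ∈ range (totalLoad S e), f k := by
  rw [sum_sum_mem_comm]
  refine sum_congr rfl fun e _ => ?_
  rw [← image_load_eq_range, sum_image (injOn_load S e)]

end Load

section Prices

variable {U : Type} [DecidableEq U] {n : ℕ} (S : Fin n → Finset U) {p₀ r : ℝ}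

lemma totalLoad_le_of_sum_price_lt {b : ℕ} (hp₀ : 0 ≤ p₀) (hr : 0 ≤ r) {e : U}
    (h : ∀ i, e ∈ S i → ∑ e' ∈ S i, p₀ * r ^ load S i e' < p₀ * r ^ b) :
    totalLoad S e ≤ b := by
  by_contra! hb
  obtain ⟨i, hi, hload⟩ := exists_load_eq_of_lt_totalLoad S hb
  refine (h i hi).not_ge ?_
  rw [← hload]
  exact single_le_sum (f := fun e' => p₀ * r ^ load S i e') (fun _ _ => by positivity) hi

/-- A bundle `T` passed over by bidder `i` was too expensive at its turn, and prices only rise. -/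
lemma le_add_sum_price_totalLoad (hp₀ : 0 ≤ p₀) (hr : 1 ≤ r) (i : Fin n) (T : Finset U)
    {x y : ℝ} (hy : 0 ≤ y) (h : ∑ e ∈ T, p₀ * r ^ load S i e ≤ x → x ≤ y) :
    x ≤ y + ∑ e ∈ T, p₀ * r ^ totalLoad S e := by
  have hfinal : 0 ≤ ∑ e ∈ T, p₀ * r ^ totalLoad S e :=
    sum_nonneg fun _ _ => by positivity
  by_cases hx : ∑ e ∈ T, p₀ * r ^ load S i e ≤ x
  · linarith [h hx]
  · have hrise : ∑ e ∈ T, p₀ * r ^ load S i e ≤ ∑ e ∈ T, p₀ * r ^ totalLoad S e :=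
      sum_le_sum fun e _ => mul_le_mul_of_nonneg_left
        (pow_le_pow_right₀ hr (load_le_totalLoad S i e)) hp₀
    linarith

variable [Fintype U]

lemma sub_one_mul_sum_sum_price_load :
    (r - 1) * ∑ i, ∑ e ∈ S i, p₀ * r ^ load S i e
      = ∑ e, p₀ * r ^ totalLoad S e - Fintype.card U * p₀ := by
  rw [sum_sum_load_eq_sum_sum_range S (fun k => p₀ * r ^ k), mul_sum, ← card_univ,
    ← nsmul_eq_mul, ← sum_const, ← sum_sub_distrib]
  refine sum_congr rfl fun e _ => ?_
  rw [← mul_sum, mul_left_comm, mul_comm (r - 1), geom_sum_mul]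
  ring

lemma sum_price_totalLoad_sub_le (hr : 1 ≤ r) (w : Fin n → ℝ)
    (hpay : ∀ i, ∑ e ∈ S i, p₀ * r ^ load S i e ≤ w i) :
    ∑ e, p₀ * r ^ totalLoad S e - Fintype.card U * p₀ ≤ (r - 1) * ∑ i, w i := by
  rw [← sub_one_mul_sum_sum_price_load]
  exact mul_le_mul_of_nonneg_left (sum_le_sum fun i _ => hpay i) (sub_nonneg.2 hr)

end Prices

theorem multiplicativePriceUpdate_approx
    {U : Type} [Fintype U] [DecidableEq U] {n : ℕ}
    (𝒮 : Fin n → Finset (Finset U)) (v : Fin n → Finset U → ℝ)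
    (S : Fin n → Finset U)
    (b : ℕ) (hb : 1 ≤ b) (hm : 1 ≤ Fintype.card U)
    (μ vmax p₀ r : ℝ)
    (hp₀ : p₀ = μ / (4 * b * Fintype.card U))
    (hr : r = (4 * b * Fintype.card U : ℝ) ^ ((1 : ℝ) / b))
    (hμ₁ : μ / 2 ≤ vmax) (hμ₂ : vmax < μ)
    (hv : ∀ i T, 0 ≤ v i T) (hvempty : ∀ i, v i ∅ = 0)
    (hvmax : ∀ (i : Fin n) (T : Finset U), T ∈ 𝒮 i → v i T ≤ vmax)
    (hvmax_att : ∃ (i : Fin n) (T : Finset U), T ∈ 𝒮 i ∧ v i T = vmax)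
    -- the algorithm's guarantees on its output `S`:
    (hexact : ∀ i, S i ∈ 𝒮 i ∨ S i = ∅)
    (halg : ∀ i : Fin n, S i ≠ ∅ →
      (∑ e ∈ S i, p₀ * r ^ load S i e) ≤ v i (S i))
    (hmax : ∀ (i : Fin n) (T : Finset U), T ∈ 𝒮 i →
      (∑ e ∈ T, p₀ * r ^ load S i e) ≤ v i T → v i T ≤ v i (S i)) :
    -- feasibility:
    (∀ e : U, totalLoad S e ≤ b) ∧
    -- approximation guarantee with respect to any feasible allocation:
    (∀ T : Fin n → Finset U, (∀ i, T i ∈ 𝒮 i ∨ T i = ∅) →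
      (∀ e : U, (Finset.univ.filter fun j : Fin n => e ∈ T j).card ≤ b) →
      (∑ i, v i (T i)) / (2 * (b * (r - 1) + 1)) ≤ ∑ i, v i (S i)) := by
  obtain ⟨i₀, T₀, hT₀, hvT₀⟩ := hvmax_att
  have hb₁ : (1 : ℝ) ≤ b := by exact_mod_cast hb
  have hm₁ : (1 : ℝ) ≤ Fintype.card U := by exact_mod_cast hm
  have hμ : 0 ≤ μ := by linarith [hv i₀ T₀]
  have hp₀₀ : 0 ≤ p₀ := hp₀ ▸ by positivity
  have hr₁ : 1 ≤ r := hr ▸ Real.one_le_rpow (by nlinarith) (by positivity)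
  have hprice : p₀ * r ^ b = μ := by
    rw [hp₀, hr, one_div, Real.rpow_inv_natCast_pow (by positivity) (by omega)]
    field_simp
  have hpay : ∀ i, ∑ e ∈ S i, p₀ * r ^ load S i e ≤ v i (S i) := fun i => by
    by_cases h : S i = ∅
    · simp [h, hv]
    · exact halg i h
  refine ⟨fun e => totalLoad_le_of_sum_price_lt S hp₀₀ (zero_le_one.trans hr₁) fun i hi => ?_,
    fun T hT hTb => ?_⟩
  · linarith [hpay i, hvmax i (S i) ((hexact i).resolve_right (ne_empty_of_mem hi))]
  set W := ∑ i, v i (S i)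
  set Q := ∑ e, p₀ * r ^ totalLoad S e
  have hbid : ∀ i, ∀ T ∈ 𝒮 i, v i T ≤ v i (S i) + ∑ e ∈ T, p₀ * r ^ totalLoad S e :=
    fun i T hT => le_add_sum_price_totalLoad S hp₀₀ hr₁ i T (hv i _) (hmax i T hT)
  have hopt : ∑ i, v i (T i) ≤ W + b * Q :=
    sum_le_sum_add_mul_sum_of_totalLoad_le T (fun _ => by positivity) hTb fun i =>
      (hT i).elim (hbid i _) fun h => by simp [h, hvempty, hv]
  have hvmax_le : vmax ≤ W + b * Q := by
    calc vmax = v i₀ T₀ := hvT₀.symm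
      _ ≤ v i₀ (S i₀) + ∑ e ∈ T₀, p₀ * r ^ totalLoad S e := hbid i₀ T₀ hT₀
      _ ≤ W + Q := add_le_add (single_le_sum (fun i _ => hv i (S i)) (mem_univ i₀))
          (sum_le_sum_of_subset_of_nonneg (subset_univ _) fun _ _ _ => by positivity)
      _ ≤ W + b * Q := by
          gcongr
          exact le_mul_of_one_le_left (sum_nonneg fun _ _ => by positivity) hb₁
  have hQ := mul_le_mul_of_nonneg_left (sum_price_totalLoad_sub_le S hr₁ _ hpay) (Nat.cast_nonneg b)
  have hbmp : b * (Fintype.card U * p₀) = μ / 4 := by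
    rw [hp₀]
    field_simp
  have hden : 0 < 2 * (b * (r - 1) + 1) := by
    nlinarith [mul_nonneg (Nat.cast_nonneg b) (sub_nonneg.2 hr₁)]
  rw [div_le_iff₀ hden]
  linarith
end
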